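/- Let Γ(μ) be a differentiable family of k×k real matrices and define B(μ) = [[Γ(μ), Γ'(μ)],[0, Γ(μ)]] where Γ'(μ) = dΓ/dμ. Then the (1,2)-block of exp(B(μ)) equals the derivative d/dμ exp(Γ(μ)) of the matrix exponential. -/

import Mathlib

/-!
For `s ≠ 0`, conjugation by `fromBlocks 1 (-s⁻¹ • 1) 0 1` turns `fromBlocks (A + s • E) E 0 A` into
`fromBlocks (A + s • E) 0 0 A`, so the `(1,2)` block of its exponential is the difference quotient
`s⁻¹ • (exp (A + s • E) - exp A)`. Letting `s → 0`, by continuity of `exp` on one side and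
differentiability on the other, the `(1,2)` block of `exp (fromBlocks A E 0 A)` is the Fréchet
derivative of `exp` at `A` in the direction `E`; the chain rule does the rest.
-/

open Matrix NormedSpace

theorem hasDerivAt_matrix {𝕜 F : Type*} [NontriviallyNormedField 𝕜] [NormedAddCommGroup F]
    [NormedSpace 𝕜 F] {m n : Type*} [Fintype m] [Fintype n] {f : 𝕜 → Matrix m n F}
    {f' : Matrix m n F} {x : 𝕜} :
    HasDerivAt f f' x ↔ ∀ i j, HasDerivAt (fun t => f t i j) (f' i j) x :=
  hasDerivAt_pi.trans <| forall_congr' fun _ => hasDerivAt_pi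

namespace Matrix

section Exp

open scoped Norms.Operator

variable {𝕂 : Type*} [RCLike 𝕂] {n m : Type*} [Fintype n] [DecidableEq n] [Fintype m]
  [DecidableEq m]

def fromBlocksDiagRingHom : Matrix n n 𝕂 × Matrix m m 𝕂 →+* Matrix (n ⊕ m) (n ⊕ m) 𝕂 where
  toFun p := fromBlocks p.1 0 0 p.2
  map_one' := fromBlocks_one
  map_mul' p q := by simp [fromBlocks_multiply]
  map_zero' := fromBlocks_zero
  map_add' p q := by simp [fromBlocks_add]

theorem exp_fromBlocks_zero_zero (X : Matrix n n 𝕂) (Y : Matrix m m 𝕂) :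
    exp (fromBlocks X 0 0 Y) = fromBlocks (exp X) 0 0 (exp Y) := by
  have hcont : Continuous (fromBlocksDiagRingHom : Matrix n n 𝕂 × Matrix m m 𝕂 → _) :=
    continuous_fst.matrix_fromBlocks continuous_const continuous_const continuous_snd
  -- Instance search does not find completeness for the operator-norm uniformity, hence the
  -- explicit `FiniteDimensional.complete` here and below.
  have h : exp (fromBlocks X 0 0 Y) = fromBlocks (exp (X, Y)).1 0 0 (exp (X, Y)).2 :=
    (@map_exp _ _ _ _ (FiniteDimensional.complete 𝕂 _) _ _ _ _ _ _ hcont (X, Y)).symm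
  rw [h]
  congr 1
  · exact Prod.fst_exp _
  · exact Prod.snd_exp _

theorem exp_fromBlocks_mul_sub_mul (X : Matrix n n 𝕂) (Y : Matrix m m 𝕂) (Q : Matrix n m 𝕂) :
    exp (fromBlocks X (Q * Y - X * Q) 0 Y) =
      fromBlocks (exp X) (Q * exp Y - exp X * Q) 0 (exp Y) := by
  let U : (Matrix (n ⊕ m) (n ⊕ m) 𝕂)ˣ :=
    { val := fromBlocks 1 Q 0 1
      inv := fromBlocks 1 (-Q) 0 1
      val_inv := by simp [fromBlocks_multiply]
      inv_val := by simp [fromBlocks_multiply] }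
  have h := Matrix.exp_units_conj U (fromBlocks X 0 0 Y)
  simpa [U, exp_fromBlocks_zero_zero, fromBlocks_multiply, sub_eq_neg_add] using h

theorem toBlocks₁₂_exp_fromBlocks_add_smul (A E : Matrix n n 𝕂) {s : 𝕂} (hs : s ≠ 0) :
    (exp (fromBlocks (A + s • E) E 0 A)).toBlocks₁₂ = s⁻¹ • (exp (A + s • E) - exp A) := by
  have hsylv : (-s⁻¹ • 1 : Matrix n n 𝕂) * A - (A + s • E) * (-s⁻¹ • 1) = E := by
    simp [smul_add, smul_smul, hs]
  have h := exp_fromBlocks_mul_sub_mul (A + s • E) A (-s⁻¹ • 1)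
  rw [hsylv] at h
  rw [h, toBlocks_fromBlocks₁₂]
  simp only [smul_mul_assoc, one_mul, mul_smul_comm, mul_one]
  module

theorem differentiable_exp : Differentiable 𝕂 (exp : Matrix n n 𝕂 → Matrix n n 𝕂) :=
  fun A => (exp_analytic A).differentiableAt

theorem fderiv_exp_apply (A E : Matrix n n 𝕂) :
    fderiv 𝕂 exp A E = (exp (fromBlocks A E 0 A)).toBlocks₁₂ := by
  have hline : HasDerivAt (fun s : 𝕂 => A + s • E) E 0 :=
    (((hasDerivAt_id' (0 : 𝕂)).smul_const E).const_add A).congr_deriv (one_smul _ _)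
  have hderiv : HasDerivAt (fun s : 𝕂 => exp (A + s • E)) (fderiv 𝕂 exp A E) 0 :=
    (differentiable_exp A).hasFDerivAt.comp_hasDerivAt_of_eq 0 hline (by simp)
  have hcont : Continuous fun s : 𝕂 => (exp (fromBlocks (A + s • E) E 0 A)).toBlocks₁₂ :=
    ((@exp_continuous _ _ _ (FiniteDimensional.complete 𝕂 _)).comp
      ((continuous_const.add (continuous_id.smul continuous_const)).matrix_fromBlocks
        continuous_const continuous_const continuous_const)).matrix_submatrix Sum.inl Sum.inr
  refine tendsto_nhds_unique hderiv.tendsto_slope_zero ?_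
  refine (hcont.tendsto' 0 _ (by simp)).mono_left nhdsWithin_le_nhds |>.congr' ?_
  filter_upwards [self_mem_nhdsWithin] with s hs
  simp [toBlocks₁₂_exp_fromBlocks_add_smul A E hs]

theorem _root_.HasDerivAt.matrix_exp {f : 𝕂 → Matrix n n 𝕂} {f' : Matrix n n 𝕂} {x : 𝕂}
    (hf : HasDerivAt f f' x) :
    HasDerivAt (fun t => exp (f t)) (exp (fromBlocks (f x) f' 0 (f x))).toBlocks₁₂ x := by
  rw [← fderiv_exp_apply]
  exact (differentiable_exp (f x)).hasFDerivAt.comp_hasDerivAt x hf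

end Exp

end Matrix

/-- The `(1,2)` block of `exp [[Γ(μ), Γ'(μ)],[0, Γ(μ)]]`, where `Γ'` is the derivative of a
differentiable family `Γ`, equals the derivative of `μ ↦ exp (Γ μ)`. -/
theorem exp_block_derivative (k : ℕ) (Γ : ℝ → Matrix (Fin k) (Fin k) ℝ)
    (hΓ : ∀ i j, Differentiable ℝ (fun μ => Γ μ i j)) (μ : ℝ) :
    (NormedSpace.exp (Matrix.fromBlocks (Γ μ)
        (Matrix.of fun i j => deriv (fun t => Γ t i j) μ) 0 (Γ μ))).toBlocks₁₂ =
      Matrix.of fun i j => deriv (fun t => NormedSpace.exp (Γ t) i j) μ := by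
  have hΓ' : HasDerivAt Γ (of fun i j => deriv (fun t => Γ t i j) μ) μ :=
    hasDerivAt_matrix.2 fun i j => (hΓ i j μ).hasDerivAt
  have hexp := hasDerivAt_matrix.1 hΓ'.matrix_exp
  ext i j
  rw [of_apply, (hexp i j).deriv]
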